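/- arXiv:2106.14320 — 2 statements merged into one kernel-verified Lean document; each statement's English description precedes it below -/
import Mathlib

section
/- The Legendre polynomial L_{n} has exactly n distinct real roots, all lying in the open interval (−1, 1). -/
/-!
Up to the factor `2ⁿ n!`, `Lₙ` is the Rodrigues polynomial `Dⁿ (X² - 1)ⁿ`: both satisfy the same
three-term recurrence. The polynomial `(X² - 1)ⁿ` vanishes to order `n` at `±1`, so for `k < n` its
`k`-th derivative still vanishes at `±1`, and Rolle's theorem between consecutive zeros in `[-1, 1]`
shows that each differentiation gains a zero in `(-1, 1)`. Thus `Dⁿ (X² - 1)ⁿ` has `n` distinct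
zeros in `(-1, 1)`; as its degree is at most `n`, these are all of its roots.
-/

open Polynomial intervalIntegral

noncomputable def legendre : ℕ → Polynomial ℝ
  | 0 => 1
  | 1 => X
  | (n + 2) =>
      C ((2 * (n : ℝ) + 3) / ((n : ℝ) + 2)) * X * legendre (n + 1) -
        C (((n : ℝ) + 1) / ((n : ℝ) + 2)) * legendre n

namespace Polynomial

open scoped Finset

section IterateDerivative

variable {R : Type*} [CommRing R]

theorem iterate_derivative_succ_X_mul (k : ℕ) (p : R[X]) :
    derivative^[k + 1] (X * p) =
      X * derivative^[k + 1] p + ((k : R[X]) + 1) * derivative^[k] p := by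
  rw [mul_comm, iterate_derivative_mul_X, nsmul_eq_mul]
  push_cast
  ring

theorem iterate_derivative_add_two_X_sq_sub_one_mul (k : ℕ) (p : R[X]) :
    derivative^[k + 2] ((X ^ 2 - 1) * p) =
      (X ^ 2 - 1) * derivative^[k + 2] p + 2 * ((k : R[X]) + 2) * X * derivative^[k + 1] p +
        ((k : R[X]) + 2) * ((k : R[X]) + 1) * derivative^[k] p := by
  rw [show (X ^ 2 - 1) * p = X * (X * p) - p by ring, iterate_derivative_sub,
    iterate_derivative_succ_X_mul, iterate_derivative_succ_X_mul, iterate_derivative_succ_X_mul]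
  push_cast
  ring

theorem monic_X_sq_sub_one [Nontrivial R] : (X ^ 2 - 1 : R[X]).Monic := by
  simpa using monic_X_pow_sub_C (1 : R) two_ne_zero

theorem natDegree_X_sq_sub_one_pow [Nontrivial R] (n : ℕ) :
    ((X ^ 2 - 1 : R[X]) ^ n).natDegree = 2 * n := by
  rw [monic_X_sq_sub_one.natDegree_pow, ← C_1, natDegree_X_pow_sub_C, mul_comm]

theorem derivative_X_sq_sub_one_pow_succ (n : ℕ) :
    derivative ((X ^ 2 - 1 : R[X]) ^ (n + 1)) = 2 * ((n : R[X]) + 1) * X * (X ^ 2 - 1) ^ n := by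
  rw [derivative_pow, derivative_sub, derivative_X_pow, derivative_one, Nat.add_sub_cancel]
  simp only [C_eq_natCast]
  push_cast
  ring

theorem iterate_derivative_succ_X_sq_sub_one_pow_succ (j m : ℕ) :
    derivative^[j + 1] ((X ^ 2 - 1 : R[X]) ^ (m + 1)) =
      2 * ((m : R[X]) + 1) * derivative^[j] (X * (X ^ 2 - 1) ^ m) := by
  have h : 2 * ((m : R[X]) + 1) = ((2 * (m + 1) : ℕ) : R[X]) := by push_cast; ring
  rw [Function.iterate_succ_apply, derivative_X_sq_sub_one_pow_succ, h, mul_assoc,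
    iterate_derivative_natCast_mul]

theorem isRoot_iterate_derivative_X_sq_sub_one_pow {t : R} (ht : t ^ 2 = 1) {k n : ℕ}
    (hk : k < n) : (derivative^[k] ((X ^ 2 - 1 : R[X]) ^ n)).IsRoot t := by
  have hdvd : X - C t ∣ X ^ 2 - 1 := dvd_iff_isRoot.mpr (by simp [ht])
  refine dvd_iff_isRoot.mp ((dvd_pow_self _ (Nat.sub_ne_zero_of_lt hk)).trans ?_)
  exact pow_sub_dvd_iterate_derivative_of_pow_dvd k (pow_dvd_pow_of_dvd hdvd n)

theorem iterate_derivative_ne_zero [IsDomain R] [CharZero R] {p : R[X]} (hp : p ≠ 0) {k : ℕ}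
    (hk : k ≤ p.natDegree) : derivative^[k] p ≠ 0 := by
  intro h
  have hcoeff := congrArg (coeff · (p.natDegree - k)) h
  simp only [coeff_iterate_derivative, Nat.sub_add_cancel hk, coeff_natDegree, coeff_zero,
    nsmul_eq_mul, mul_eq_zero, Nat.cast_eq_zero, Nat.descFactorial_eq_zero_iff_lt,
    leadingCoeff_eq_zero] at hcoeff
  exact hcoeff.elim (by omega) hp

end IterateDerivative

section Rodrigues

variable (R : Type*) [CommRing R]

noncomputable def rodrigues (n : ℕ) : R[X] := derivative^[n] ((X ^ 2 - 1) ^ n)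

variable {R}

theorem natDegree_rodrigues_le [Nontrivial R] (n : ℕ) : (rodrigues R n).natDegree ≤ n := by
  have := natDegree_iterate_derivative ((X ^ 2 - 1 : R[X]) ^ n) n
  rw [natDegree_X_sq_sub_one_pow] at this
  rw [rodrigues]
  omega

theorem derivative_rodrigues_succ (n : ℕ) :
    derivative (rodrigues R (n + 1)) =
      2 * ((n : R[X]) + 1) * X * derivative (rodrigues R n) +
        2 * ((n : R[X]) + 1) ^ 2 * rodrigues R n := by
  simp only [rodrigues, ← Function.iterate_succ_apply' derivative]
  rw [iterate_derivative_succ_X_sq_sub_one_pow_succ, iterate_derivative_succ_X_mul]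
  ring

theorem rodrigues_succ (n : ℕ) :
    rodrigues R (n + 1) =
      2 * ((n : R[X]) + 1) * X * rodrigues R n + 2 * (X ^ 2 - 1) * derivative (rodrigues R n) := by
  cases n with
  | zero => norm_num [rodrigues, map_ofNat C]
  | succ m =>
    -- expand `D^(m+2) (X² - 1)^(m+2)` in two ways and eliminate the common term `w`
    set w := derivative^[m] ((X ^ 2 - 1 : R[X]) ^ (m + 1))
    have hX : rodrigues R (m + 2) =
        2 * ((m : R[X]) + 2) * (X * rodrigues R (m + 1) + ((m : R[X]) + 1) * w) := by
      simp only [rodrigues]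
      rw [iterate_derivative_succ_X_sq_sub_one_pow_succ, iterate_derivative_succ_X_mul]
      push_cast
      ring
    have hu : rodrigues R (m + 2) =
        (X ^ 2 - 1) * derivative (rodrigues R (m + 1)) +
          2 * ((m : R[X]) + 2) * X * rodrigues R (m + 1) +
            ((m : R[X]) + 2) * ((m : R[X]) + 1) * w := by
      simp only [rodrigues, ← Function.iterate_succ_apply' derivative]
      rw [pow_succ', iterate_derivative_add_two_X_sq_sub_one_mul]
    push_cast
    linear_combination 2 * hu - hX

theorem rodrigues_add_two (n : ℕ) :
    rodrigues R (n + 2) =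
      2 * (2 * (n : R[X]) + 3) * X * rodrigues R (n + 1) -
        4 * ((n : R[X]) + 1) ^ 2 * rodrigues R n := by
  have h := rodrigues_succ (R := R) (n + 1)
  push_cast at h
  linear_combination h + 2 * (X ^ 2 - 1) * derivative_rodrigues_succ (R := R) n -
    2 * ((n : R[X]) + 1) * X * rodrigues_succ (R := R) n

end Rodrigues

section RootsIoo

noncomputable def rootsIoo (p : ℝ[X]) (a b : ℝ) : Finset ℝ :=
  {x ∈ p.roots.toFinset | x ∈ Set.Ioo a b}

theorem mem_rootsIoo {p : ℝ[X]} (hp : p ≠ 0) {a b x : ℝ} :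
    x ∈ rootsIoo p a b ↔ p.IsRoot x ∧ x ∈ Set.Ioo a b := by
  rw [rootsIoo, Finset.mem_filter, Multiset.mem_toFinset, mem_roots hp]

theorem card_rootsIoo_lt_card_rootsIoo_derivative {p : ℝ[X]} (hp' : derivative p ≠ 0) {a b : ℝ}
    (hab : a < b) (ha : p.IsRoot a) (hb : p.IsRoot b) :
    #(rootsIoo p a b) < #(rootsIoo (derivative p) a b) := by
  have hp : p ≠ 0 := fun h => hp' (by rw [h, derivative_zero])
  set s := insert a (insert b (rootsIoo p a b))
  have hs : ∀ x ∈ s, p.IsRoot x ∧ x ∈ Set.Icc a b := by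
    simp only [s, Finset.mem_insert, mem_rootsIoo hp]
    rintro x (rfl | rfl | ⟨hx, hxab⟩)
    exacts [⟨ha, le_rfl, hab.le⟩, ⟨hb, hab.le, le_rfl⟩, ⟨hx, Set.Ioo_subset_Icc_self hxab⟩]
  have hcard : #s = #(rootsIoo p a b) + 2 := by
    rw [Finset.card_insert_of_notMem, Finset.card_insert_of_notMem]
    · simp [mem_rootsIoo hp]
    · simp [mem_rootsIoo hp, hab.ne]
  have hrolle : #s ≤ #(rootsIoo (derivative p) a b) + 1 := by
    refine Finset.card_le_of_interleaved fun x hx y hy hxy _ => ?_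
    obtain ⟨hx, hxa, -⟩ := hs x hx
    obtain ⟨hy, -, hyb⟩ := hs y hy
    obtain ⟨z, hz, hz'⟩ := exists_deriv_eq_zero hxy p.continuousOn (hx.trans hy.symm)
    refine ⟨z, (mem_rootsIoo hp').mpr ⟨by rwa [IsRoot, ← p.deriv], ?_, ?_⟩, hz⟩
    exacts [hxa.trans_lt hz.1, hz.2.trans_le hyb]
  omega

theorem roots_toFinset_eq_rootsIoo_of_natDegree_le {p : ℝ[X]} {a b : ℝ}
    (h : p.natDegree ≤ #(rootsIoo p a b)) : p.roots.toFinset = rootsIoo p a b :=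
  (Finset.eq_of_subset_of_card_le (Finset.filter_subset _ _)
    (p.roots.toFinset_card_le.trans ((card_roots' p).trans h))).symm

end RootsIoo

theorem le_card_rootsIoo_iterate_derivative_X_sq_sub_one_pow {n k : ℕ} (hk : k ≤ n) :
    k ≤ #(rootsIoo (derivative^[k] ((X ^ 2 - 1 : ℝ[X]) ^ n)) (-1) 1) := by
  induction k with
  | zero => exact Nat.zero_le _
  | succ k ih =>
    have hne : derivative^[k + 1] ((X ^ 2 - 1 : ℝ[X]) ^ n) ≠ 0 :=
      iterate_derivative_ne_zero (monic_X_sq_sub_one.pow n).ne_zero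
        (by rw [natDegree_X_sq_sub_one_pow]; omega)
    rw [Function.iterate_succ_apply'] at hne ⊢
    exact (ih (by omega)).trans_lt <| card_rootsIoo_lt_card_rootsIoo_derivative hne
      (by norm_num) (isRoot_iterate_derivative_X_sq_sub_one_pow (by norm_num) hk)
      (isRoot_iterate_derivative_X_sq_sub_one_pow (by norm_num) hk)

end Polynomial

open Nat in
theorem C_mul_legendre_eq_rodrigues : ∀ n : ℕ, C (2 ^ n * n ! : ℝ) * legendre n = rodrigues ℝ n
  | 0 => by simp [legendre, rodrigues]
  | 1 => by norm_num [legendre, rodrigues]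
  | n + 2 => by
    have h₁ : (2 ^ (n + 2) * (n + 2)! : ℝ) * ((2 * n + 3) / (n + 2)) =
        2 * (2 * n + 3) * (2 ^ (n + 1) * (n + 1)!) := by
      rw [factorial_succ (n + 1)]; push_cast; field_simp; ring
    have h₀ : (2 ^ (n + 2) * (n + 2)! : ℝ) * ((n + 1) / (n + 2)) =
        4 * (n + 1) ^ 2 * (2 ^ n * n !) := by
      rw [factorial_succ (n + 1), factorial_succ n]; push_cast; field_simp; ring
    replace h₁ := congrArg C h₁
    replace h₀ := congrArg C h₀
    simp only [map_mul, map_add, map_pow, map_natCast, map_ofNat, map_one] at h₁ h₀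
    rw [rodrigues_add_two, ← C_mul_legendre_eq_rodrigues (n + 1), ← C_mul_legendre_eq_rodrigues n,
      legendre]
    simp only [map_mul, map_pow, map_natCast, map_ofNat]
    linear_combination (X * legendre (n + 1)) * h₁ - legendre n * h₀

theorem legendre_roots (n : ℕ) :
    (legendre n).roots.toFinset.card = n ∧
      ∀ r ∈ (legendre n).roots, r ∈ Set.Ioo (-1 : ℝ) 1 := by
  have hroots : (legendre n).roots = (rodrigues ℝ n).roots := by
    rw [← C_mul_legendre_eq_rodrigues, roots_C_mul _ (by positivity)]
  have hlower : n ≤ (rootsIoo (rodrigues ℝ n) (-1) 1).card :=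
    le_card_rootsIoo_iterate_derivative_X_sq_sub_one_pow le_rfl
  have hupper := natDegree_rodrigues_le (R := ℝ) n
  have heq := roots_toFinset_eq_rootsIoo_of_natDegree_le (hupper.trans hlower)
  rw [hroots, heq]
  refine ⟨le_antisymm ?_ hlower, fun r hr => ?_⟩
  · exact heq ▸ (rodrigues ℝ n).roots.toFinset_card_le.trans ((card_roots' _).trans hupper)
  · exact (Finset.mem_filter.mp (heq ▸ Multiset.mem_toFinset.mpr hr)).2
end

section
/- For every n ≥ 0, the Legendre polynomial L_n is orthogonal to all polynomials of degree strictly less than n: if p is a polynomial with deg p < n, then ∫_{−1}^{1} L_n(x) p(x) dx = 0. -/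
open Polynomial intervalIntegral

/-! The moments `∫_{-1}^{1} x^k L_n(x) dx` have a closed form: they vanish unless `k ≡ n (mod 2)`,
and then equal `2 k (k - 1) ⋯ (k - n + 1) / ∏_{i=0}^{n} (k - n + 1 + 2i)`. The three-term recurrence
of `L_n` turns into a recurrence for the moments, which the closed form satisfies, so induction from
`∫ x^k = 2 / (k + 1)` identifies the moments. The falling factorial in the numerator vanishes for
`k < n`, and orthogonality to every polynomial of degree `< n` follows by linearity. -/

theorem integral_pow_neg_one_one (k : ℕ) :
    ∫ x in (-1 : ℝ)..1, x ^ k = if Even k then 2 / ((k : ℝ) + 1) else 0 := by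
  rw [integral_pow]
  split_ifs with hk
  · rw [(Even.add_one hk).neg_one_pow]
    ring
  · rw [(Nat.not_even_iff_odd.mp hk).add_one.neg_one_pow]
    simp

theorem integral_mul_eval_eq_zero_of_degree_lt {f : ℝ → ℝ} {a b : ℝ} (hf : Continuous f)
    {n : ℕ} (hf_pow : ∀ i < n, ∫ x in a..b, x ^ i * f x = 0) {p : ℝ[X]} (hp : p.degree < n) :
    ∫ x in a..b, f x * p.eval x = 0 := by
  rcases eq_or_ne p 0 with rfl | hp0
  · simp
  have hp' : p.natDegree < n := (natDegree_lt_iff_degree_lt hp0).mpr hp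
  have hexpand : (fun x => f x * p.eval x) =
      fun x => ∑ i ∈ Finset.range n, p.coeff i * (x ^ i * f x) := by
    funext x
    rw [eval_eq_sum_range' hp', Finset.mul_sum]
    exact Finset.sum_congr rfl fun i _ => by ring
  have hint (i : ℕ) :
      IntervalIntegrable (fun x => p.coeff i * (x ^ i * f x)) MeasureTheory.volume a b :=
    (continuous_const.mul ((continuous_pow i).mul hf)).intervalIntegrable _ _
  rw [hexpand, integral_finsetSum fun i _ => hint i]
  refine Finset.sum_eq_zero fun i hi => ?_
  rw [integral_const_mul, hf_pow i (Finset.mem_range.mp hi), mul_zero]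

/-- For `k ≥ n` with `k ≡ n (mod 2)` this is the classical `2 k! / ((k - n)‼ (k + n + 1)‼)`. -/
noncomputable def legendreMoment (n k : ℕ) : ℝ :=
  if Even (k + n) then
    2 * (∏ i ∈ Finset.range n, ((k : ℝ) - i)) /
      ∏ i ∈ Finset.range (n + 1), ((k : ℝ) - n + 1 + 2 * i)
  else 0

theorem legendreMoment_zero (k : ℕ) :
    legendreMoment 0 k = if Even k then 2 / ((k : ℝ) + 1) else 0 := by
  simp [legendreMoment, add_comm]

theorem legendreMoment_one (k : ℕ) : legendreMoment 1 k = legendreMoment 0 (k + 1) := by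
  rw [legendreMoment, legendreMoment, add_zero]
  split_ifs with hk
  · have hk0 : (k : ℝ) ≠ 0 := Nat.cast_ne_zero.mpr (by rintro rfl; simp at hk)
    simp only [Finset.prod_range_succ, Finset.prod_range_zero]
    push_cast
    ring_nf
    field_simp
  · rfl

theorem legendreMoment_denom_ne_zero {k n : ℕ} (h : Even (k + n)) :
    ∏ i ∈ Finset.range (n + 1), ((k : ℝ) - n + 1 + 2 * i) ≠ 0 := by
  -- each factor is an odd integer
  obtain ⟨r, hr⟩ := h
  refine Finset.prod_ne_zero_iff.mpr fun i _ hi => ?_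
  have : (k : ℤ) - n + 1 + 2 * i = 0 := by exact_mod_cast hi
  omega

theorem legendreMoment_add_two (m k : ℕ) :
    legendreMoment (m + 2) k =
      (2 * (m : ℝ) + 3) / ((m : ℝ) + 2) * legendreMoment (m + 1) (k + 1) -
        ((m : ℝ) + 1) / ((m : ℝ) + 2) * legendreMoment m k := by
  have hpar₁ : Even (k + (m + 2)) ↔ Even (k + m) := by
    simp [← add_assoc, Nat.even_add_one]
  have hpar₂ : Even (k + 1 + (m + 1)) ↔ Even (k + m) := by
    rw [show k + 1 + (m + 1) = k + (m + 2) by ring, hpar₁]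
  simp only [legendreMoment, hpar₁, hpar₂]
  split_ifs with hkm
  swap
  · ring
  set D := ∏ i ∈ Finset.range m, ((k : ℝ) - i)
  set P := ∏ i ∈ Finset.range (m + 1), ((k : ℝ) - m + 1 + 2 * i)
  have hD₂ : ∏ i ∈ Finset.range (m + 2), ((k : ℝ) - i) = D * (k - m) * (k - m - 1) := by
    simp only [Finset.prod_range_succ, D]; push_cast; ring
  have hD₁ : ∏ i ∈ Finset.range (m + 1), (((k + 1 : ℕ) : ℝ) - i) = (k + 1) * D := by
    rw [Finset.prod_range_succ']; push_cast
    simp only [D]; ring_nf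
  have hP₁ : ∏ i ∈ Finset.range (m + 1 + 1), (((k + 1 : ℕ) : ℝ) - (m + 1 : ℕ) + 1 + 2 * i) =
      P * (k + m + 3) := by
    rw [Finset.prod_range_succ]; push_cast
    simp only [P]; ring_nf
  have hP₂ : ∏ i ∈ Finset.range (m + 2 + 1), ((k : ℝ) - (m + 2 : ℕ) + 1 + 2 * i) =
      (k - m - 1) * P * (k + m + 3) := by
    rw [Finset.prod_range_succ, Finset.prod_range_succ']; push_cast
    simp only [P]; ring_nf
  have hP : P ≠ 0 := legendreMoment_denom_ne_zero hkm
  have hk : (k : ℝ) - m - 1 ≠ 0 := by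
    have := legendreMoment_denom_ne_zero (hpar₁.mpr hkm)
    rw [hP₂] at this
    exact left_ne_zero_of_mul (left_ne_zero_of_mul this)
  rw [hD₁, hD₂, hP₁, hP₂]
  field_simp
  ring

theorem legendre_eval_add_two (n : ℕ) (x : ℝ) :
    (legendre (n + 2)).eval x =
      (2 * (n : ℝ) + 3) / ((n : ℝ) + 2) * (x * (legendre (n + 1)).eval x) -
        ((n : ℝ) + 1) / ((n : ℝ) + 2) * (legendre n).eval x := by
  simp only [legendre, eval_sub, eval_mul, eval_C, eval_X]
  ring

theorem integral_pow_mul_legendre (n k : ℕ) :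
    ∫ x in (-1 : ℝ)..1, x ^ k * (legendre n).eval x = legendreMoment n k := by
  induction n using legendre.induct generalizing k with
  | case1 =>
    simp only [legendre, eval_one, mul_one]
    rw [integral_pow_neg_one_one, legendreMoment_zero]
  | case2 =>
    simp only [legendre, eval_X, ← pow_succ]
    rw [integral_pow_neg_one_one, legendreMoment_one, legendreMoment_zero]
  | case3 m ih₁ ih₀ =>
    have hint (n j : ℕ) (c : ℝ) : IntervalIntegrable
        (fun x => c * (x ^ j * (legendre n).eval x)) MeasureTheory.volume (-1) 1 :=
      (continuous_const.mul ((continuous_pow j).mul (legendre n).continuous)).intervalIntegrable _ _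
    have hexpand : (fun x : ℝ => x ^ k * (legendre (m + 2)).eval x) = fun x =>
        (2 * (m : ℝ) + 3) / ((m : ℝ) + 2) * (x ^ (k + 1) * (legendre (m + 1)).eval x) -
          ((m : ℝ) + 1) / ((m : ℝ) + 2) * (x ^ k * (legendre m).eval x) := by
      funext x
      rw [legendre_eval_add_two, pow_succ]
      ring
    rw [hexpand, integral_sub (hint _ _ _) (hint _ _ _), integral_const_mul, integral_const_mul,
      ih₁, ih₀, legendreMoment_add_two]

theorem legendre_orthogonal_to_lower_degree (n : ℕ) (p : Polynomial ℝ)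
    (hp : p.degree < n) :
    ∫ x in (-1 : ℝ)..1, (legendre n).eval x * p.eval x = 0 := by
  refine integral_mul_eval_eq_zero_of_degree_lt (legendre n).continuous (fun i hi => ?_) hp
  rw [integral_pow_mul_legendre, legendreMoment,
    Finset.prod_eq_zero (Finset.mem_range.mpr hi) (sub_self _), mul_zero, zero_div, ite_self]
end
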